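/- Let r > 0, let ℓ ≥ 1, let K = {a₀ < a₁ < … < a_{ℓ−1}} be a set of ℓ nonnegative integers, and let b ∈ {0, 1, …, ℓ}. Let M be the ℓ × ℓ real matrix whose rows are indexed by the elements of K in increasing order and whose columns are indexed by the elements of {0, …, ℓ} \ {b} in increasing order, with entry in row s ∈ K and column t given by (W_r)_{s,t}. Then det M = e^{−ℓr²/8} · (−1)^{Σ_K} · √(b! / (F_{[ℓ+1]} · F_K)) · (r/√2)^{Σ_K − ℓ(ℓ+1)/2 + b} · C_K · Γ_{K,b}, where the power of r/√2 is an integer power (possibly negative). In particular, for b = ℓ: the ℓ × ℓ matrix with rows K and columns {0,…,ℓ−1} has determinant e^{−ℓr²/8} · (−1)^{Σ_K} · √(1/(F_{[ℓ]} F_K)) · (r/√2)^{Σ_K − ℓ(ℓ−1)/2} · C_K. -/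

import Mathlib

open Real

/-- `(W_r)_{s,t} = e^{−r²/8} (−1)^s √(t!/s!) binom(s,t) (r/√2)^{s−t}` for `s ≥ t`, and `0` otherwise. -/
noncomputable def W (r : ℝ) (s t : ℕ) : ℝ :=
  if t ≤ s then
    Real.exp (-r^2 / 8) * (-1)^s * Real.sqrt ((Nat.factorial t : ℝ) / (Nat.factorial s : ℝ)) *
      (Nat.choose s t : ℝ) * (r / Real.sqrt 2)^(s - t)
  else 0

/-- `Γ_{K,b}` for the set `K` enumerated by `a`. -/
noncomputable def Gam {ℓ : ℕ} (a : Fin ℓ → ℕ) (b : ℕ) : ℝ :=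
  (1 / (Nat.factorial b : ℝ)) *
    ∑ d ∈ Finset.range (b+1),
      (-1:ℝ)^d * (Nat.choose b d : ℝ) * ∏ c, ((a c : ℝ) - (d : ℝ))

/-- `C_K = ∏_{c₂ < c₁} (a_{c₁} − a_{c₂})`. -/
noncomputable def CK {ℓ : ℕ} (a : Fin ℓ → ℕ) : ℝ :=
  ∏ c₁, ∏ c₂ ∈ Finset.univ.filter (· < c₁), ((a c₁ : ℝ) - (a c₂ : ℝ))

/-- `F_K = ∏_c (a_c)!`. -/
noncomputable def FK {ℓ : ℕ} (a : Fin ℓ → ℕ) : ℝ := ∏ c, (Nat.factorial (a c) : ℝ)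

/-- `F_{[ℓ]} = ∏_{c=0}^{ℓ−1} c!`. -/
noncomputable def Fl (ℓ : ℕ) : ℝ := ∏ c ∈ Finset.range ℓ, (Nat.factorial c : ℝ)

open Finset Polynomial Matrix
open scoped Nat

/-!
Write `x = r/√2`. Since `√(t!/s!) binom(s,t) = s^{(t)} / (√s! √t!)`, with `s^{(t)}` the falling
factorial, each entry factors as `W_r(s,t) = [e^{-r²/8} (-1)^s x^s / √s!] · s^{(t)} · [x^t √t!]⁻¹`,
so the determinant is a product of row and column factors times `det (a_s^{(t)})`. As `y^{(t)}` is
monic of degree `t` in `y`, for the columns `t = 0, …, ℓ-1` this is the Vandermonde determinant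
`C_K`. With column `b` deleted from `0, …, ℓ`, expand the Vandermonde determinant of
`(a_0, …, a_{ℓ-1}, y)` along its last row: `C_K ∏_c (y - a_c) = ∑_j ± y^{(j)} D_j`, where `D_j` is
the minor without column `j`. The `b`-th finite difference at `y = 0` kills `y^{(j)}` for `j ≠ b`
and sends `y^{(b)}` to `b!`; this isolates `b! D_b = C_K · b! Γ_{K,b}`.
-/

theorem sum_range_neg_one_pow_mul_choose_mul_descFactorial {R : Type*} [CommRing R] (b j : ℕ) :
    ∑ d ∈ range (b + 1), (-1 : R) ^ d * b.choose d * d.descFactorial j =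
      if j = b then (-1) ^ b * (b ! : R) else 0 := by
  have h := fwdDiff_iter_choose_zero j b
  rw [fwdDiff_iter_eq_sum_shift] at h
  have h' := congrArg (fun z : ℤ => ((-1) ^ b * j ! * z : R)) h
  simp only [zero_add, smul_eq_mul, mul_one, Int.cast_sum, mul_sum] at h'
  convert h' using 1
  · refine sum_congr rfl fun d hd => ?_
    obtain ⟨e, rfl⟩ : ∃ e, b = d + e := ⟨b - d, by grind⟩
    have h_sq : (-1 : R) ^ e * (-1) ^ e = 1 := by rw [← pow_add, ← two_mul, pow_mul]; simp
    rw [Nat.descFactorial_eq_factorial_mul_choose, Nat.add_sub_cancel_left]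
    push_cast
    linear_combination -(-1 : R) ^ d * (d + e).choose d * j ! * d.choose j * h_sq
  · by_cases hjb : j = b
    · simp [hjb]
    · simp [hjb, Ne.symm hjb]

theorem Fin.prod_Ioi_castSucc {M : Type*} [CommMonoid M] {n : ℕ} (i : Fin n)
    (g : Fin (n + 1) → M) :
    ∏ j ∈ Ioi i.castSucc, g j = (∏ j ∈ Ioi i, g j.castSucc) * g (Fin.last n) := by
  simp only [← filter_lt_eq_Ioi, prod_filter, Fin.prod_univ_castSucc, Fin.castSucc_lt_castSucc_iff,
    Fin.castSucc_lt_last, if_true]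

section FallingFactorialVandermonde

variable {R : Type*} [CommRing R] {n : ℕ}

theorem prod_Ioi_snoc_sub (x : Fin n → R) (y : R) :
    ∏ i : Fin (n + 1), ∏ j ∈ Ioi i,
        (Fin.snoc (α := fun _ => R) x y j - Fin.snoc (α := fun _ => R) x y i) =
      (∏ i, ∏ j ∈ Ioi i, (x j - x i)) * ∏ i, (y - x i) := by
  have : Ioi (Fin.last n) = ∅ := Ioi_eq_empty.2 (Fin.top_eq_last n ▸ isMax_top)
  simp [Fin.prod_univ_castSucc, Fin.prod_Ioi_castSucc, prod_mul_distrib, this]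

theorem det_descPochhammer_eval [IsDomain R] (x : Fin n → R) :
    det (of fun i j : Fin n => (descPochhammer R j).eval (x i)) =
      ∏ i, ∏ j ∈ Ioi i, (x j - x i) := by
  rw [← det_eval_matrixOfPolynomials_eq_det_vandermonde x _ (fun i => descPochhammer_natDegree R i)
    (fun i => monic_descPochhammer R i), det_vandermonde]

theorem prod_Ioi_sub_mul_prod_sub_eq_sum_det [IsDomain R] (x : Fin n → R) (y : R) :
    (∏ i, ∏ j ∈ Ioi i, (x j - x i)) * ∏ i, (y - x i) =
      ∑ j : Fin (n + 1), (-1) ^ (n + j : ℕ) * (descPochhammer R j).eval y *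
        det (of fun s t : Fin n => (descPochhammer R (j.succAbove t)).eval (x s)) := by
  rw [← prod_Ioi_snoc_sub, ← det_descPochhammer_eval, det_succ_row _ (Fin.last n)]
  refine sum_congr rfl fun j _ => ?_
  simp only [of_apply, Fin.snoc_last, Fin.val_last, Fin.succAbove_last]
  congr 2
  ext s t
  simp

theorem factorial_mul_det_descPochhammer_succAbove [IsDomain R] (x : Fin n → R) (p : Fin (n + 1)) :
    ((p : ℕ) ! : R) * det (of fun s t : Fin n => (descPochhammer R (p.succAbove t)).eval (x s)) =
      (∏ i, ∏ j ∈ Ioi i, (x j - x i)) *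
        ∑ d ∈ range (p + 1), (-1) ^ d * ((p : ℕ).choose d : R) * ∏ c, (x c - d) := by
  set D := fun j : Fin (n + 1) =>
    det (of fun s t : Fin n => (descPochhammer R (j.succAbove t)).eval (x s))
  have h_sign : (-1 : R) ^ n * (-1) ^ (n + p : ℕ) * (-1) ^ (p : ℕ) = 1 := by
    rw [← pow_add, ← pow_add]; exact Even.neg_one_pow ⟨n + p, by ring⟩
  have h_flip (d : ℕ) : ∏ c, (x c - d) = (-1) ^ n * ∏ c, ((d : R) - x c) := by
    simpa using prod_neg (s := univ) fun c => (d : R) - x c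
  symm
  calc (∏ i, ∏ j ∈ Ioi i, (x j - x i)) *
        ∑ d ∈ range (p + 1), (-1) ^ d * ((p : ℕ).choose d : R) * ∏ c, (x c - d)
      = (-1) ^ n * ∑ d ∈ range (p + 1), (-1) ^ d * ((p : ℕ).choose d : R) *
          ((∏ i, ∏ j ∈ Ioi i, (x j - x i)) * ∏ c, ((d : R) - x c)) := by
        simp_rw [h_flip, mul_sum]
        exact sum_congr rfl fun d _ => by ring
    _ = (-1) ^ n * ∑ j : Fin (n + 1), (-1) ^ (n + j : ℕ) * D j *
          ∑ d ∈ range (p + 1), (-1) ^ d * ((p : ℕ).choose d : R) * (d.descFactorial j : R) := by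
        simp_rw [prod_Ioi_sub_mul_prod_sub_eq_sum_det, descPochhammer_eval_eq_descFactorial,
          mul_sum]
        rw [sum_comm]
        exact sum_congr rfl fun j _ => sum_congr rfl fun d _ => by ring
    _ = (p ! : R) * D p := by
        simp_rw [sum_range_neg_one_pow_mul_choose_mul_descFactorial, Fin.val_eq_val, mul_ite,
          mul_zero, sum_ite_eq', if_pos (mem_univ p)]
        linear_combination (p ! : R) * D p * h_sign

end FallingFactorialVandermonde

theorem CK_eq_prod_Ioi {ℓ : ℕ} (a : Fin ℓ → ℕ) :
    CK a = ∏ i, ∏ j ∈ Ioi i, ((a j : ℝ) - a i) :=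
  (prod_comm' fun _ _ => by simp).symm

theorem det_descFactorial_eq_CK {ℓ : ℕ} (a : Fin ℓ → ℕ) :
    det (of fun s t : Fin ℓ => ((a s).descFactorial t : ℝ)) = CK a := by
  simpa [descPochhammer_eval_eq_descFactorial, ← CK_eq_prod_Ioi] using
    det_descPochhammer_eval fun s => (a s : ℝ)

theorem det_descFactorial_succAbove_eq {ℓ : ℕ} (a : Fin ℓ → ℕ) (p : Fin (ℓ + 1)) :
    det (of fun s t : Fin ℓ => ((a s).descFactorial (p.succAbove t) : ℝ)) = CK a * Gam a p := by
  have h := factorial_mul_det_descPochhammer_succAbove (fun s => (a s : ℝ)) p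
  simp only [descPochhammer_eval_eq_descFactorial, ← CK_eq_prod_Ioi] at h
  rw [Gam, ← mul_assoc, mul_comm (CK a), mul_assoc, ← h, one_div,
    inv_mul_cancel_left₀ (by positivity)]

theorem W_eq_mul_descFactorial {r : ℝ} (hr : r ≠ 0) (s t : ℕ) :
    W r s t = Real.exp (-r ^ 2 / 8) * (-1) ^ s * (r / √2) ^ s / √(s ! : ℝ) *
      s.descFactorial t * ((r / √2) ^ t * √(t ! : ℝ))⁻¹ := by
  have hx : r / √2 ≠ 0 := div_ne_zero hr (by positivity)
  have h_sq : √(t ! : ℝ) * √(t ! : ℝ) = t ! := Real.mul_self_sqrt (by positivity)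
  rw [W]
  split_ifs with hts
  · rw [Nat.descFactorial_eq_factorial_mul_choose, pow_sub₀ _ hx hts,
      Real.sqrt_div (by positivity)]
    push_cast
    field_simp
    linear_combination (s.choose t : ℝ) * h_sq
  · simp [Nat.descFactorial_eq_zero_iff_lt.2 (not_le.1 hts)]

theorem Fin.sum_intCast_val (n : ℕ) : ∑ i : Fin n, (i : ℤ) = n * (n - 1) / 2 := by
  refine Int.eq_ediv_of_mul_eq_right two_ne_zero ?_
  induction n with
  | zero => simp
  | succ n ih =>
    simp only [Fin.sum_univ_castSucc, Fin.val_castSucc, Fin.val_last]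
    push_cast
    linear_combination ih

theorem Fin.sum_intCast_val_succAbove {n : ℕ} (p : Fin (n + 1)) :
    ∑ t : Fin n, ((p.succAbove t : ℕ) : ℤ) = n * (n + 1) / 2 - p := by
  have h := Fin.sum_univ_succAbove (fun i : Fin (n + 1) => (i : ℤ)) p
  rw [Fin.sum_intCast_val] at h
  push_cast at h
  rw [show ((n : ℤ) + 1) * (n + 1 - 1) = n * (n + 1) by ring] at h
  linarith

theorem Fl_eq_prod_fin (ℓ : ℕ) : Fl ℓ = ∏ t : Fin ℓ, ((t : ℕ) ! : ℝ) :=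
  (Fin.prod_univ_eq_prod_range _ ℓ).symm

theorem Fl_succ_eq_factorial_mul_prod_succAbove {ℓ : ℕ} (p : Fin (ℓ + 1)) :
    Fl (ℓ + 1) = ((p : ℕ) ! : ℝ) * ∏ t : Fin ℓ, ((p.succAbove t : ℕ) ! : ℝ) := by
  rw [Fl_eq_prod_fin, Fin.prod_univ_succAbove _ p]

theorem det_W_eq {r : ℝ} (hr : r ≠ 0) {ℓ : ℕ} (a c : Fin ℓ → ℕ) :
    det (of fun s t : Fin ℓ => W r (a s) (c t)) =
      Real.exp (-(ℓ : ℝ) * r ^ 2 / 8) * (-1) ^ (∑ s, a s) *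
        √(1 / ((∏ t, ((c t) ! : ℝ)) * FK a)) *
        (r / √2) ^ ((∑ s, (a s : ℤ)) - ∑ t, (c t : ℤ)) *
        det (of fun s t : Fin ℓ => ((a s).descFactorial (c t) : ℝ)) := by
  have hx : r / √2 ≠ 0 := div_ne_zero hr (by positivity)
  have h_entries : (of fun s t : Fin ℓ => W r (a s) (c t)) =
      diagonal (fun s => Real.exp (-r ^ 2 / 8) * (-1) ^ a s * (r / √2) ^ a s / √((a s)! : ℝ)) *
        of (fun s t => ((a s).descFactorial (c t) : ℝ)) *
        diagonal (fun t => ((r / √2) ^ c t * √((c t)! : ℝ))⁻¹) := by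
    ext s t
    simp [W_eq_mul_descFactorial hr]
  have h_exp : Real.exp (-(ℓ : ℝ) * r ^ 2 / 8) = Real.exp (-r ^ 2 / 8) ^ ℓ := by
    rw [← Real.exp_nat_mul]; ring_nf
  rw [h_entries, det_mul, det_mul, det_diagonal, det_diagonal, h_exp, FK, one_div, Real.sqrt_inv,
    Real.sqrt_mul (by positivity), Real.sqrt_prod _ fun _ _ => by positivity,
    Real.sqrt_prod _ fun _ _ => by positivity, zpow_sub₀ hx]
  simp only [prod_div_distrib, prod_mul_distrib, prod_inv_distrib, prod_const, card_univ,
    Fintype.card_fin, prod_pow_eq_pow_sum]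
  rw [← Nat.cast_sum, ← Nat.cast_sum, zpow_natCast, zpow_natCast]
  field_simp

theorem stmt12_general (r : ℝ) (hr : 0 < r) (ℓ : ℕ)
    (a : Fin ℓ → ℕ) (b : ℕ) (hb : b ≤ ℓ) :
    Matrix.det (Matrix.of fun s t : Fin ℓ =>
        W r (a s) (if (t : ℕ) < b then (t : ℕ) else (t : ℕ) + 1))
      = Real.exp (-(ℓ:ℝ) * r^2 / 8) * (-1)^(∑ c, a c) *
          Real.sqrt ((Nat.factorial b : ℝ) / (Fl (ℓ+1) * FK a)) *
          (r / Real.sqrt 2) ^ ((∑ c, (a c : ℤ)) - ((ℓ:ℤ) * ((ℓ:ℤ)+1)) / 2 + (b:ℤ)) *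
          CK a * Gam a b
    ∧ Matrix.det (Matrix.of fun s t : Fin ℓ => W r (a s) (t : ℕ))
      = Real.exp (-(ℓ:ℝ) * r^2 / 8) * (-1)^(∑ c, a c) *
          Real.sqrt (1 / (Fl ℓ * FK a)) *
          (r / Real.sqrt 2) ^ ((∑ c, (a c : ℤ)) - ((ℓ:ℤ) * ((ℓ:ℤ)-1)) / 2) *
          CK a := by
  obtain ⟨p, rfl⟩ : ∃ p : Fin (ℓ + 1), (p : ℕ) = b := ⟨⟨b, Nat.lt_succ_of_le hb⟩, rfl⟩
  have h_cols (t : Fin ℓ) : (if (t : ℕ) < p then (t : ℕ) else (t : ℕ) + 1) = p.succAbove t := by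
    simp [Fin.succAbove, Fin.lt_def, apply_ite Fin.val]
  constructor
  · simp only [h_cols]
    rw [det_W_eq hr.ne', det_descFactorial_succAbove_eq, Fin.sum_intCast_val_succAbove,
      Fl_succ_eq_factorial_mul_prod_succAbove p, mul_assoc ((p : ℕ)! : ℝ),
      div_mul_cancel_left₀ (by positivity), ← one_div, ← sub_add]
    ring
  · rw [det_W_eq hr.ne', det_descFactorial_eq_CK, Fl_eq_prod_fin, Fin.sum_intCast_val]

theorem stmt12 (r : ℝ) (hr : 0 < r) (ℓ : ℕ) (hℓ : 1 ≤ ℓ)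
    (a : Fin ℓ → ℕ) (ha : StrictMono a) (b : ℕ) (hb : b ≤ ℓ) :
    Matrix.det (Matrix.of fun s t : Fin ℓ =>
        W r (a s) (if (t : ℕ) < b then (t : ℕ) else (t : ℕ) + 1))
      = Real.exp (-(ℓ:ℝ) * r^2 / 8) * (-1)^(∑ c, a c) *
          Real.sqrt ((Nat.factorial b : ℝ) / (Fl (ℓ+1) * FK a)) *
          (r / Real.sqrt 2) ^ ((∑ c, (a c : ℤ)) - ((ℓ:ℤ) * ((ℓ:ℤ)+1)) / 2 + (b:ℤ)) *
          CK a * Gam a b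
    ∧ Matrix.det (Matrix.of fun s t : Fin ℓ => W r (a s) (t : ℕ))
      = Real.exp (-(ℓ:ℝ) * r^2 / 8) * (-1)^(∑ c, a c) *
          Real.sqrt (1 / (Fl ℓ * FK a)) *
          (r / Real.sqrt 2) ^ ((∑ c, (a c : ℤ)) - ((ℓ:ℤ) * ((ℓ:ℤ)-1)) / 2) *
          CK a :=
  stmt12_general r hr ℓ a b hb
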